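/- Assume: (i) μ-almost everywhere, G = R_{t+1} + γ(S_{t+1})·(1 − λ(S_{t+1}))·j(S_{t+1}) + γ(S_{t+1})·λ(S_{t+1})·G' (the λ-return recursion bootstrapped with j); (ii) for every state s with μ(S_t = s) > 0, j(s) = E[G | S_t = s] and v(s) = E[(G − j(s))² | S_t = s]; (iii) μ-almost everywhere the conditional expectation of G' given 𝒢 equals j(S_{t+1}); and (iv) μ-almost everywhere the conditional expectation of (G' − j(S_{t+1}))² given 𝒢 equals v(S_{t+1}). Define the TD error δ = R_{t+1} + γ(S_{t+1})·j(S_{t+1}) − j(S_t). Then for every state s with μ(S_t = s) > 0: j(s) = E[ R_{t+1} + γ(S_{t+1})·j(S_{t+1}) | S_t = s ] and v(s) = E[ δ² + γ(S_{t+1})²·λ(S_{t+1})²·v(S_{t+1}) | S_t = s ]. -/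

import Mathlib

open MeasureTheory ProbabilityTheory
open scoped ENNReal

/-!
Condition on `𝒢 = σ(S_t, R_{t+1}, S_{t+1})`. Since `S` is finite and `R_{t+1}` is bounded, every
term of the recursion except `G'` is a bounded `𝒢`-measurable factor, so it comes out of the
conditional expectation. For the variance write `G - j(S_t) = δ + γλ · (G' - j(S_{t+1}))`:
by (iii) the cross term has conditional expectation `0`, and by (iv) the square term has
conditional expectation `γ²λ² v(S_{t+1})`. Integrating these identities over the
`𝒢`-measurable event `{S_t = s}` gives both equations.
-/

section CondExp

variable {Ω : Type*} {m mΩ : MeasurableSpace Ω} {μ : Measure Ω}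

theorem condExp_mul_ae_eq_of_memLp_top {W Y h : Ω → ℝ} (hW : StronglyMeasurable[m] W)
    (hW_top : MemLp W ∞ μ) (hY : Integrable Y μ) (hYh : μ[Y | m] =ᵐ[μ] h) :
    μ[W * Y | m] =ᵐ[μ] W * h :=
  (condExp_mul_of_stronglyMeasurable_left hW (hY.mul_of_top_right hW_top) hY).trans
    (hYh.mono fun ω hω => by simp [hω])

theorem condExp_sub_ae_eq_zero (hm : m ≤ mΩ) [SigmaFinite (μ.trim hm)] {Y h : Ω → ℝ}
    (hY : Integrable Y μ) (hh : StronglyMeasurable[m] h) (hh_int : Integrable h μ)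
    (hYh : μ[Y | m] =ᵐ[μ] h) : μ[Y - h | m] =ᵐ[μ] 0 := by
  refine (condExp_sub hY hh_int m).trans ?_
  rw [condExp_of_stronglyMeasurable hm hh hh_int]
  exact hYh.sub_eq

theorem condExp_add_mul_ae_eq (hm : m ≤ mΩ) [SigmaFinite (μ.trim hm)] {Z W Y h : Ω → ℝ}
    (hZ : StronglyMeasurable[m] Z) (hZ_int : Integrable Z μ) (hW : StronglyMeasurable[m] W)
    (hW_top : MemLp W ∞ μ) (hY : Integrable Y μ) (hYh : μ[Y | m] =ᵐ[μ] h) :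
    μ[Z + W * Y | m] =ᵐ[μ] Z + W * h :=
  (condExp_add hZ_int (hY.mul_of_top_right hW_top) m).trans
    ((condExp_of_stronglyMeasurable hm hZ hZ_int).eventuallyEq.add
      (condExp_mul_ae_eq_of_memLp_top hW hW_top hY hYh))

theorem integral_cond_eq_of_condExp_ae_eq (hm : m ≤ mΩ) [SigmaFinite (μ.trim hm)]
    {X Z : Ω → ℝ} (hX : Integrable X μ) (hXZ : μ[X | m] =ᵐ[μ] Z) {A : Set Ω}
    (hA : MeasurableSet[m] A) :
    ∫ ω, X ω ∂μ[|A] = ∫ ω, Z ω ∂μ[|A] := by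
  rw [ProbabilityTheory.cond, integral_smul_measure, integral_smul_measure,
    ← setIntegral_condExp hm hX hA, setIntegral_congr_ae (hm A hA) (hXZ.mono fun ω hω _ => hω)]

end CondExp

theorem memLp_top_comp_of_finite {Ω S : Type*} [MeasurableSpace Ω] {μ : Measure Ω} [Finite S]
    [MeasurableSpace S] [MeasurableSingletonClass S] {X : Ω → S} (hX : Measurable X)
    (f : S → ℝ) : MemLp (fun ω => f (X ω)) ∞ μ := by
  obtain ⟨C, hC⟩ := Finite.exists_le fun s => ‖f s‖
  exact memLp_top_of_bound ((measurable_of_finite f).comp hX).aestronglyMeasurable C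
    (.of_forall fun ω => hC (X ω))

section LambdaReturn

variable {Ω S : Type*} {m mΩ : MeasurableSpace Ω} {μ : Measure Ω} [IsFiniteMeasure μ]
  [Finite S] [MeasurableSpace S] [MeasurableSingletonClass S]
  {St St1 : Ω → S} {R G G' : Ω → ℝ} {γ lam j v : S → ℝ}

theorem condExp_lambdaReturn_ae_eq (hm : m ≤ mΩ) (hSt1 : Measurable[m] St1)
    (hR : Measurable[m] R) (hR_top : MemLp R ∞ μ) (hG' : Integrable G' μ)
    (hrec : ∀ᵐ ω ∂μ, G ω = R ω + γ (St1 ω) * (1 - lam (St1 ω)) * j (St1 ω)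
        + γ (St1 ω) * lam (St1 ω) * G' ω)
    (hcondG' : μ[G' | m] =ᵐ[μ] fun ω => j (St1 ω)) :
    μ[G | m] =ᵐ[μ] fun ω => R ω + γ (St1 ω) * j (St1 ω) := by
  have h_sm (f : S → ℝ) : StronglyMeasurable[m] fun ω => f (St1 ω) :=
    ((measurable_of_finite f).comp hSt1).stronglyMeasurable
  have h_top (f : S → ℝ) : MemLp (fun ω => f (St1 ω)) ∞ μ :=
    memLp_top_comp_of_finite (hSt1.mono hm le_rfl) f
  set c : Ω → ℝ := fun ω => γ (St1 ω) * lam (St1 ω)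
  set Z : Ω → ℝ := fun ω => R ω + γ (St1 ω) * (1 - lam (St1 ω)) * j (St1 ω)
  have hZ : StronglyMeasurable[m] Z :=
    (hR.add ((measurable_of_finite fun s => γ s * (1 - lam s) * j s).comp hSt1)).stronglyMeasurable
  have hZ_int : Integrable Z μ :=
    (hR_top.add (h_top fun s => γ s * (1 - lam s) * j s)).integrable le_top
  calc μ[G | m] =ᵐ[μ] μ[Z + c * G' | m] := condExp_congr_ae hrec
    _ =ᵐ[μ] Z + c * fun ω => j (St1 ω) :=
      condExp_add_mul_ae_eq hm hZ hZ_int (h_sm fun s => γ s * lam s)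
        (h_top fun s => γ s * lam s) hG' hcondG'
    _ = fun ω => R ω + γ (St1 ω) * j (St1 ω) := by
      funext ω
      simp only [Z, c, Pi.add_apply, Pi.mul_apply]
      ring

theorem condExp_sq_sub_lambdaReturn_ae_eq (hm : m ≤ mΩ) (hSt : Measurable[m] St)
    (hSt1 : Measurable[m] St1) (hR : Measurable[m] R) (hR_top : MemLp R ∞ μ)
    (hG' : MemLp G' 2 μ)
    (hrec : ∀ᵐ ω ∂μ, G ω = R ω + γ (St1 ω) * (1 - lam (St1 ω)) * j (St1 ω)
        + γ (St1 ω) * lam (St1 ω) * G' ω)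
    (hcondG' : μ[G' | m] =ᵐ[μ] fun ω => j (St1 ω))
    (hcondVar : μ[(fun ω => (G' ω - j (St1 ω)) ^ 2) | m] =ᵐ[μ] fun ω => v (St1 ω)) :
    μ[(fun ω => (G ω - j (St ω)) ^ 2) | m] =ᵐ[μ] fun ω =>
      (R ω + γ (St1 ω) * j (St1 ω) - j (St ω)) ^ 2
        + γ (St1 ω) ^ 2 * lam (St1 ω) ^ 2 * v (St1 ω) := by
  have h_sm (f : S → ℝ) : StronglyMeasurable[m] fun ω => f (St1 ω) :=
    ((measurable_of_finite f).comp hSt1).stronglyMeasurable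
  have h_top (f : S → ℝ) : MemLp (fun ω => f (St1 ω)) ∞ μ :=
    memLp_top_comp_of_finite (hSt1.mono hm le_rfl) f
  set δ : Ω → ℝ := fun ω => R ω + γ (St1 ω) * j (St1 ω) - j (St ω)
  set c : Ω → ℝ := fun ω => γ (St1 ω) * lam (St1 ω)
  set Y : Ω → ℝ := fun ω => G' ω - j (St1 ω)
  set Y2 : Ω → ℝ := fun ω => (G' ω - j (St1 ω)) ^ 2
  have hδ : StronglyMeasurable[m] δ :=
    ((hR.add ((measurable_of_finite fun s => γ s * j s).comp hSt1)).sub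
      ((measurable_of_finite j).comp hSt)).stronglyMeasurable
  have hδ_top : MemLp δ ∞ μ := (hR_top.add (h_top fun s => γ s * j s)).sub
    (memLp_top_comp_of_finite (hSt.mono hm le_rfl) j)
  have hδc : StronglyMeasurable[m] (2 * δ * c) :=
    (stronglyMeasurable_const.mul hδ).mul (h_sm fun s => γ s * lam s)
  have hδc_top : MemLp (2 * δ * c) ∞ μ :=
    (h_top fun s => γ s * lam s).mul (r := ∞) (hδ_top.mul (r := ∞) (memLp_top_const 2))
  have hG'_int : Integrable G' μ := hG'.integrable one_le_two
  have hY : Integrable Y μ := hG'_int.sub ((h_top j).integrable le_top)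
  have hY2 : Integrable Y2 μ := (hG'.sub ((h_top j).mono_exponent le_top)).integrable_sq
  have hδ2 : Integrable (δ ^ 2) μ := (hδ_top.mono_exponent le_top).integrable_sq
  have hc2_top : MemLp (c ^ 2) ∞ μ := h_top fun s => (γ s * lam s) ^ 2
  calc μ[(fun ω => (G ω - j (St ω)) ^ 2) | m]
      =ᵐ[μ] μ[δ ^ 2 + 2 * δ * c * Y + c ^ 2 * Y2 | m] :=
        condExp_congr_ae (hrec.mono fun ω hω => by
          simp only [hω, δ, c, Y, Y2, Pi.add_apply, Pi.mul_apply, Pi.pow_apply, Pi.ofNat_apply]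
          ring)
    _ =ᵐ[μ] μ[δ ^ 2 + 2 * δ * c * Y | m] + μ[c ^ 2 * Y2 | m] :=
      condExp_add (hδ2.add (hY.mul_of_top_right hδc_top)) (hY2.mul_of_top_right hc2_top) m
    _ =ᵐ[μ] δ ^ 2 + 2 * δ * c * 0 + c ^ 2 * fun ω => v (St1 ω) :=
      (condExp_add_mul_ae_eq hm (hδ.pow 2) hδ2 hδc hδc_top hY
        (condExp_sub_ae_eq_zero hm hG'_int (h_sm j) ((h_top j).integrable le_top) hcondG')).add
        (condExp_mul_ae_eq_of_memLp_top (h_sm fun s => (γ s * lam s) ^ 2) hc2_top hY2 hcondVar)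
    _ = _ := by
      funext ω
      simp only [δ, c, Pi.add_apply, Pi.mul_apply, Pi.pow_apply, Pi.zero_apply]
      ring

end LambdaReturn

theorem variance_bellman_equation_general {Ω : Type*} [MeasurableSpace Ω] (μ : Measure Ω)
    [IsProbabilityMeasure μ]
    {S : Type*} [Fintype S] [MeasurableSpace S] [MeasurableSingletonClass S]
    (St St1 : Ω → S) (R G G' : Ω → ℝ)
    (hSt : Measurable St) (hSt1 : Measurable St1)
    (hR : Measurable R)
    (hGsq : MemLp G 2 μ) (hG'sq : MemLp G' 2 μ) (hRbd : ∃ C, ∀ ω, |R ω| ≤ C)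
    (γ lam : S → ℝ)
    (j v : S → ℝ)
    -- (i) the λ-return recursion bootstrapped with j
    (hrec : ∀ᵐ ω ∂μ, G ω = R ω + γ (St1 ω) * (1 - lam (St1 ω)) * j (St1 ω)
        + γ (St1 ω) * lam (St1 ω) * G' ω)
    -- (ii) j and v are the conditional mean and variance of G given S_t = s
    (hj : ∀ s : S, 0 < μ {ω | St ω = s} → j s = ∫ ω, G ω ∂(μ[|{ω | St ω = s}]))
    (hv : ∀ s : S, 0 < μ {ω | St ω = s} →
        v s = ∫ ω, (G ω - j s) ^ 2 ∂(μ[|{ω | St ω = s}]))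
    -- (iii) conditional expectation of G' given 𝒢 equals j(S_{t+1})
    (hcondG' : μ[G' | MeasurableSpace.comap (fun ω => (St ω, R ω, St1 ω)) inferInstance]
        =ᵐ[μ] fun ω => j (St1 ω))
    -- (iv) conditional expectation of (G' − j(S_{t+1}))² given 𝒢 equals v(S_{t+1})
    (hcondVar : μ[(fun ω => (G' ω - j (St1 ω)) ^ 2) |
          MeasurableSpace.comap (fun ω => (St ω, R ω, St1 ω)) inferInstance]
        =ᵐ[μ] fun ω => v (St1 ω))
    (δ : Ω → ℝ) (hδ : δ = fun ω => R ω + γ (St1 ω) * j (St1 ω) - j (St ω)) :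
    ∀ s : S, 0 < μ {ω | St ω = s} →
      j s = ∫ ω, (R ω + γ (St1 ω) * j (St1 ω)) ∂(μ[|{ω | St ω = s}]) ∧
      v s = ∫ ω, (δ ω ^ 2 + γ (St1 ω) ^ 2 * lam (St1 ω) ^ 2 * v (St1 ω))
          ∂(μ[|{ω | St ω = s}]) := by
  intro s hs
  subst hδ
  have h𝒢 := (hSt.prodMk (hR.prodMk hSt1)).comap_le
  have hT := comap_measurable (m := inferInstance) fun ω => (St ω, R ω, St1 ω)
  obtain ⟨C, hC⟩ := hRbd
  have hR_top : MemLp R ∞ μ := memLp_top_of_bound hR.aestronglyMeasurable C (.of_forall hC)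
  have hA := hT.fst (measurableSet_singleton s)
  have hjSt : MemLp (fun ω => j (St ω)) 2 μ :=
    (memLp_top_comp_of_finite hSt j).mono_exponent le_top
  constructor
  · rw [hj s hs]
    exact integral_cond_eq_of_condExp_ae_eq h𝒢 (hGsq.integrable one_le_two)
      (condExp_lambdaReturn_ae_eq h𝒢 hT.snd.snd hT.snd.fst hR_top (hG'sq.integrable one_le_two)
        hrec hcondG') hA
  · calc v s = ∫ ω, (G ω - j (St ω)) ^ 2 ∂μ[|{ω | St ω = s}] := by
          rw [hv s hs]
          exact integral_congr_ae ((ae_cond_mem (hSt (measurableSet_singleton s))).mono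
            fun ω (hω : St ω = s) => by simp only [hω])
      _ = _ := integral_cond_eq_of_condExp_ae_eq h𝒢 (hGsq.sub hjSt).integrable_sq
          (condExp_sq_sub_lambdaReturn_ae_eq h𝒢 hT.fst hT.snd.snd hT.snd.fst hR_top hG'sq
            hrec hcondG' hcondVar) hA

/-- Bellman equation for the variance of the λ-return: under the λ-return recursion
bootstrapped with the true value function `j`, the variance `v` satisfies a TD
fixed-point equation with meta-reward `δ²` and discount `γ²λ²`. -/
theorem variance_bellman_equation {Ω : Type*} [MeasurableSpace Ω] (μ : Measure Ω)
    [IsProbabilityMeasure μ]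
    {S : Type*} [Fintype S] [Nonempty S] [MeasurableSpace S] [MeasurableSingletonClass S]
    (St St1 : Ω → S) (R G G' : Ω → ℝ)
    (hSt : Measurable St) (hSt1 : Measurable St1)
    (hR : Measurable R) (hG : Measurable G) (hG' : Measurable G')
    (hGsq : MemLp G 2 μ) (hG'sq : MemLp G' 2 μ) (hRbd : ∃ C, ∀ ω, |R ω| ≤ C)
    (γ lam : S → ℝ) (hγ : ∀ s, γ s ∈ Set.Icc (0 : ℝ) 1) (hlam : ∀ s, lam s ∈ Set.Icc (0 : ℝ) 1)
    (j v : S → ℝ)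
    -- (i) the λ-return recursion bootstrapped with j
    (hrec : ∀ᵐ ω ∂μ, G ω = R ω + γ (St1 ω) * (1 - lam (St1 ω)) * j (St1 ω)
        + γ (St1 ω) * lam (St1 ω) * G' ω)
    -- (ii) j and v are the conditional mean and variance of G given S_t = s
    (hj : ∀ s : S, 0 < μ {ω | St ω = s} → j s = ∫ ω, G ω ∂(μ[|{ω | St ω = s}]))
    (hv : ∀ s : S, 0 < μ {ω | St ω = s} →
        v s = ∫ ω, (G ω - j s) ^ 2 ∂(μ[|{ω | St ω = s}]))
    -- (iii) conditional expectation of G' given 𝒢 equals j(S_{t+1})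
    (hcondG' : μ[G' | MeasurableSpace.comap (fun ω => (St ω, R ω, St1 ω)) inferInstance]
        =ᵐ[μ] fun ω => j (St1 ω))
    -- (iv) conditional expectation of (G' − j(S_{t+1}))² given 𝒢 equals v(S_{t+1})
    (hcondVar : μ[(fun ω => (G' ω - j (St1 ω)) ^ 2) |
          MeasurableSpace.comap (fun ω => (St ω, R ω, St1 ω)) inferInstance]
        =ᵐ[μ] fun ω => v (St1 ω))
    (δ : Ω → ℝ) (hδ : δ = fun ω => R ω + γ (St1 ω) * j (St1 ω) - j (St ω)) :
    ∀ s : S, 0 < μ {ω | St ω = s} →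
      j s = ∫ ω, (R ω + γ (St1 ω) * j (St1 ω)) ∂(μ[|{ω | St ω = s}]) ∧
      v s = ∫ ω, (δ ω ^ 2 + γ (St1 ω) ^ 2 * lam (St1 ω) ^ 2 * v (St1 ω))
          ∂(μ[|{ω | St ω = s}]) :=
  variance_bellman_equation_general μ St St1 R G G' hSt hSt1 hR hGsq hG'sq hRbd γ lam j v hrec hj hv
    hcondG' hcondVar δ hδ
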